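/- Let B, B' ∈ ℂ^{m×m}, y ∈ ℂ^m a unit vector with B y = 0, Y_⊥ an orthonormal basis of span{y}^⊥, and Z_⊥ an orthonormal basis of span{B' y}^⊥, with Z_⊥ᴴ B Y_⊥ invertible. Suppose Δλ ∈ ℂ, E ∈ ℂ^{m×m}, r ∈ ℂ^m and Δy ∈ ℂ^m with yᴴ Δy = 0 satisfy Δλ·B' y + B Δy + E y = r. Then ‖Δy‖ ≤ ‖(Z_⊥ᴴ B Y_⊥)⁻¹‖ · (‖E‖ + ‖r‖). -/

import Mathlib

/-
Since `yᴴ Δy = 0` and `[Y y]` is unitary, `Δy = Y w` with `w = Yᴴ Δy`. Applying `Zᴴ` to the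
perturbed equation removes the `Δλ B' y` term and leaves the square system
`(Zᴴ B Y) w = Zᴴ (r - E y)`. Hence `w = (Zᴴ B Y)⁻¹ Zᴴ (r - E y)`, and because `Y` and `Zᴴ` have
spectral norm at most one, `‖Δy‖ = ‖w‖ ≤ ‖(Zᴴ B Y)⁻¹‖ (‖r‖ + ‖E‖ ‖y‖)`.
-/

open Matrix

/-- Euclidean norm of a complex vector. -/
noncomputable def enorm' {n : ℕ} (x : Fin n → ℂ) : ℝ :=
  ‖(WithLp.equiv 2 (Fin n → ℂ)).symm x‖

/-- Spectral (ℓ²-operator) norm of a complex matrix. -/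
noncomputable def spec {a b : ℕ} (M : Matrix (Fin a) (Fin b) ℂ) : ℝ :=
  ‖LinearMap.toContinuousLinearMap (Matrix.toEuclideanLin M)‖

open scoped Matrix.Norms.L2Operator

namespace Matrix

section Complement

variable {R : Type*} [CommRing R] [StarRing R] {n l : Type*} [Fintype n] [Fintype l]
  [DecidableEq n] [DecidableEq l]

/-- The square matrix `[Y y]` has orthonormal columns, so its left inverse `[Y y]ᴴ` is also a
right inverse. -/
lemma mul_conjTranspose_add_vecMulVec_eq_one (hcard : Fintype.card n = Fintype.card l + 1)
    {Y : Matrix n l R} {y : n → R} (hY : Yᴴ * Y = 1) (hYy : Yᴴ *ᵥ y = 0)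
    (hy : star y ⬝ᵥ y = 1) : Y * Yᴴ + vecMulVec y (star y) = 1 := by
  set C : Matrix n Unit R := replicateCol Unit y
  have hCC : Cᴴ * C = 1 := by
    ext i j
    simpa [C, conjTranspose_replicateCol, dotProduct] using hy
  have hYC : Yᴴ * C = 0 := by
    ext i j
    simpa [C, mulVec, dotProduct, mul_apply] using congrFun hYy i
  have hCY : Cᴴ * Y = 0 := by
    simpa [conjTranspose_mul] using congrArg conjTranspose hYC
  have hgram : fromRows Yᴴ Cᴴ * fromCols Y C = 1 := by
    rw [fromRows_mul, mul_fromCols, mul_fromCols, fromRows_fromCols_eq_fromBlocks,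
      hY, hYC, hCY, hCC, fromBlocks_one]
  have e : n ≃ l ⊕ Unit := Fintype.equivOfCardEq (by simp [hcard])
  rw [← (fromCols_mul_fromRows_eq_one_comm e Y C Yᴴ Cᴴ).mpr hgram, fromCols_mul_fromRows,
    vecMulVec_eq Unit, conjTranspose_replicateCol]

lemma mulVec_conjTranspose_mulVec_eq_self (hcard : Fintype.card n = Fintype.card l + 1)
    {Y : Matrix n l R} {y x : n → R} (hY : Yᴴ * Y = 1) (hYy : Yᴴ *ᵥ y = 0)
    (hy : star y ⬝ᵥ y = 1) (hx : star y ⬝ᵥ x = 0) : Y *ᵥ (Yᴴ *ᵥ x) = x := by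
  have := congrArg (· *ᵥ x) (mul_conjTranspose_add_vecMulVec_eq_one hcard hY hYy hy)
  simpa [add_mulVec, vecMulVec_mulVec, hx] using this

end Complement

variable {𝕜 : Type*} [RCLike 𝕜] {m n : Type*} [Fintype m] [Fintype n] [DecidableEq n]

lemma l2_opNorm_one_le : ‖(1 : Matrix n n 𝕜)‖ ≤ 1 := by
  rcases subsingleton_or_nontrivial (Matrix n n 𝕜) with h | h
  · simp [Subsingleton.elim (1 : Matrix n n 𝕜) 0]
  · exact CStarRing.norm_one.le

lemma l2_opNorm_le_one_of_conjTranspose_mul_self_eq_one {A : Matrix m n 𝕜}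
    (hA : Aᴴ * A = 1) : ‖A‖ ≤ 1 := by
  have : ‖A‖ * ‖A‖ ≤ 1 := by
    rw [← l2_opNorm_conjTranspose_mul_self, hA]; exact l2_opNorm_one_le
  nlinarith [norm_nonneg A]

end Matrix

lemma star_dotProduct_self_eq_norm_sq {𝕜 : Type*} [RCLike 𝕜] {n : Type*} [Fintype n]
    (x : n → 𝕜) :
    star x ⬝ᵥ x = (‖WithLp.toLp 2 x‖ : 𝕜) ^ 2 := by
  rw [← inner_self_eq_norm_sq_to_K, EuclideanSpace.inner_toLp_toLp, dotProduct_comm]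

lemma enorm'_mulVec_le {a b : ℕ} (A : Matrix (Fin a) (Fin b) ℂ) (x : Fin b → ℂ) :
    enorm' (A *ᵥ x) ≤ spec A * enorm' x :=
  l2_opNorm_mulVec A (WithLp.toLp 2 x)

lemma enorm'_sub_le {n : ℕ} (x z : Fin n → ℂ) : enorm' (x - z) ≤ enorm' x + enorm' z :=
  norm_sub_le (WithLp.toLp 2 x) (WithLp.toLp 2 z)

lemma enorm'_mulVec_le_of_spec_le_one {a b : ℕ} {A : Matrix (Fin a) (Fin b) ℂ}
    (hA : spec A ≤ 1) (x : Fin b → ℂ) : enorm' (A *ᵥ x) ≤ enorm' x :=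
  (enorm'_mulVec_le A x).trans (mul_le_of_le_one_left (norm_nonneg (WithLp.toLp 2 x)) hA)

theorem stmt_14_general (k : ℕ) (B B' E : Matrix (Fin (k + 1)) (Fin (k + 1)) ℂ)
    (y Δy r : Fin (k + 1) → ℂ) (Δμ : ℂ)
    (hyunit : enorm' y = 1)
    (Y Z : Matrix (Fin (k + 1)) (Fin k) ℂ)
    (hY : Yᴴ * Y = 1) (hYy : Yᴴ.mulVec y = 0)
    (hZ : Zᴴ * Z = 1) (hZB'y : Zᴴ.mulVec (B'.mulVec y) = 0)
    (hinv : IsUnit (Zᴴ * B * Y))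
    (hΔy : star y ⬝ᵥ Δy = 0)
    (heq : Δμ • B'.mulVec y + B.mulVec Δy + E.mulVec y = r) :
    enorm' Δy ≤ spec (Zᴴ * B * Y)⁻¹ * (spec E + enorm' r) := by
  have hyy : star y ⬝ᵥ y = 1 := by
    have hy_norm : ‖WithLp.toLp 2 y‖ = 1 := hyunit
    rw [star_dotProduct_self_eq_norm_sq, hy_norm, RCLike.ofReal_one, one_pow]
  have hΔy_eq : Y *ᵥ (Yᴴ *ᵥ Δy) = Δy :=
    mulVec_conjTranspose_mulVec_eq_self (by simp) hY hYy hyy hΔy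
  have hsys : (Zᴴ * B * Y) *ᵥ (Yᴴ *ᵥ Δy) = Zᴴ *ᵥ (r - E *ᵥ y) := by
    rw [← mulVec_mulVec, ← mulVec_mulVec, hΔy_eq, ← heq]
    simp [mulVec_add, mulVec_smul, hZB'y]
  have := hinv.invertible
  have hw : Yᴴ *ᵥ Δy = (Zᴴ * B * Y)⁻¹ *ᵥ (Zᴴ *ᵥ (r - E *ᵥ y)) :=
    (inv_mulVec_eq_vec hsys.symm).symm
  have hZ_le : spec Zᴴ ≤ 1 :=
    (l2_opNorm_conjTranspose Z).trans_le (l2_opNorm_le_one_of_conjTranspose_mul_self_eq_one hZ)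
  have hrhs : enorm' (Zᴴ *ᵥ (r - E *ᵥ y)) ≤ spec E + enorm' r :=
    calc enorm' (Zᴴ *ᵥ (r - E *ᵥ y)) ≤ enorm' (r - E *ᵥ y) :=
          enorm'_mulVec_le_of_spec_le_one hZ_le _
      _ ≤ enorm' r + spec E * enorm' y :=
          (enorm'_sub_le _ _).trans (add_le_add le_rfl (enorm'_mulVec_le _ _))
      _ = spec E + enorm' r := by rw [hyunit, mul_one, add_comm]
  calc enorm' Δy = enorm' (Y *ᵥ (Yᴴ *ᵥ Δy)) := by rw [hΔy_eq]
    _ ≤ enorm' (Yᴴ *ᵥ Δy) :=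
      enorm'_mulVec_le_of_spec_le_one (l2_opNorm_le_one_of_conjTranspose_mul_self_eq_one hY) _
    _ ≤ spec (Zᴴ * B * Y)⁻¹ * enorm' (Zᴴ *ᵥ (r - E *ᵥ y)) := by
      rw [hw]; exact enorm'_mulVec_le _ _
    _ ≤ spec (Zᴴ * B * Y)⁻¹ * (spec E + enorm' r) :=
      mul_le_mul_of_nonneg_left hrhs (norm_nonneg _)

theorem stmt_14 (k : ℕ) (B B' E : Matrix (Fin (k + 1)) (Fin (k + 1)) ℂ)
    (y Δy r : Fin (k + 1) → ℂ) (Δμ : ℂ)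
    (hyunit : enorm' y = 1) (hy : B.mulVec y = 0)
    (Y Z : Matrix (Fin (k + 1)) (Fin k) ℂ)
    (hY : Yᴴ * Y = 1) (hYy : Yᴴ.mulVec y = 0)
    (hZ : Zᴴ * Z = 1) (hZB'y : Zᴴ.mulVec (B'.mulVec y) = 0)
    (hinv : IsUnit (Zᴴ * B * Y))
    (hΔy : star y ⬝ᵥ Δy = 0)
    (heq : Δμ • B'.mulVec y + B.mulVec Δy + E.mulVec y = r) :
    enorm' Δy ≤ spec (Zᴴ * B * Y)⁻¹ * (spec E + enorm' r) :=
  stmt_14_general k B B' E y Δy r Δμ hyunit Y Z hY hYy hZ hZB'y hinv hΔy heq
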